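/- Let t be an attack–defense tree term over B in which each basic event occurs at most once, let p : B → [0,1], and let X₁ be the set of satisfying assignments of t, i.e., X₁ = { S ⊆ B(t) : eval_S(t) = tt }. Then the probabilistic bottom-up semantics satisfies V_p(t) = Σ_{S ∈ X₁} ( Π_{b ∈ S} p(b) · Π_{b ∈ B(t) \ S} (1 − p(b)) ). -/
import Mathlib

/-- Attack–defense tree terms over a type `B` of basic events. -/
inductive ADT (B : Type*) where
  | leaf : B → ADT B
  | and : ADT B → ADT B → ADT B
  | or : ADT B → ADT B → ADT B
  | not : ADT B → ADT B

namespace ADT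

variable {B : Type*} [DecidableEq B]

/-- The finite set `B(t)` of basic events occurring in a term. -/
def events : ADT B → Finset B
  | .leaf b => {b}
  | .and t₁ t₂ => events t₁ ∪ events t₂
  | .or t₁ t₂ => events t₁ ∪ events t₂
  | .not t => events t

/-- Linearity: each basic event occurs at most once in the term. -/
def Linear : ADT B → Prop
  | .leaf _ => True
  | .and t₁ t₂ => Linear t₁ ∧ Linear t₂ ∧ Disjoint (events t₁) (events t₂)
  | .or t₁ t₂ => Linear t₁ ∧ Linear t₂ ∧ Disjoint (events t₁) (events t₂)
  | .not t => Linear t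

/-- Boolean semantics `eval_S(t)` for an assignment `S ⊆ B` (the set of basic
events set to true). -/
def eval (S : Finset B) : ADT B → Bool
  | .leaf b => decide (b ∈ S)
  | .and t₁ t₂ => eval S t₁ && eval S t₂
  | .or t₁ t₂ => eval S t₁ || eval S t₂
  | .not t => !eval S t


/-- The probabilistic bottom-up traversal semantics `V_p(t)`. -/
def Vp (p : B → ℝ) : ADT B → ℝ
  | .leaf b => p b
  | .and t₁ t₂ => Vp p t₁ * Vp p t₂
  | .or t₁ t₂ => Vp p t₁ + Vp p t₂ - Vp p t₁ * Vp p t₂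
  | .not t => 1 - Vp p t

lemma sum_weights (E : Finset B) (p : B → ℝ) :
    ∑ S ∈ E.powerset, (∏ b ∈ S, p b) * ∏ b ∈ E \ S, (1 - p b) = 1 := by
  have h := Finset.prod_add p (fun b => 1 - p b) E
  simp at h
  rw [← h]

lemma sum_powerset_union {s t : Finset B} (h : Disjoint s t) (f : Finset B → ℝ) :
    ∑ S ∈ (s ∪ t).powerset, f S = ∑ A ∈ s.powerset, ∑ C ∈ t.powerset, f (A ∪ C) := by
  rw [← Finset.sum_product']
  refine Finset.sum_nbij' (fun S => (S ∩ s, S ∩ t)) (fun P => P.1 ∪ P.2) ?_ ?_ ?_ ?_ ?_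
  · intro S hS
    simp only [Finset.mem_powerset] at hS
    simp [Finset.mem_product, Finset.inter_subset_right]
  · intro P hP
    simp only [Finset.mem_product, Finset.mem_powerset] at hP ⊢
    exact Finset.union_subset_union hP.1 hP.2
  · intro S hS
    simp only [Finset.mem_powerset] at hS
    dsimp only
    rw [← Finset.inter_union_distrib_left, Finset.inter_eq_left.mpr hS]
  · intro P hP
    simp only [Finset.mem_product, Finset.mem_powerset] at hP
    have h1 : P.2 ∩ s = ∅ := Finset.disjoint_iff_inter_eq_empty.mp
      (h.symm.mono_left hP.2)
    have h2 : P.1 ∩ t = ∅ := Finset.disjoint_iff_inter_eq_empty.mp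
      (h.mono_left hP.1)
    ext <;> simp [Finset.union_inter_distrib_right, h1, h2,
      Finset.inter_eq_left.mpr hP.1, Finset.inter_eq_left.mpr hP.2]
  · intro S hS
    simp only [Finset.mem_powerset] at hS
    dsimp only
    rw [← Finset.inter_union_distrib_left, Finset.inter_eq_left.mpr hS]

lemma eval_congr (t : ADT B) {S S' : Finset B}
    (h : S ∩ t.events = S' ∩ t.events) : eval S t = eval S' t := by
  induction t with
  | leaf b =>
      have hb := Finset.ext_iff.mp h b
      simp [events] at hb
      simp [eval, hb]
  | and t₁ t₂ ih₁ ih₂ =>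
      simp only [events] at h
      have h₁ : S ∩ t₁.events = S' ∩ t₁.events := by
        have := congrArg (· ∩ t₁.events) h
        simpa [Finset.inter_assoc, Finset.union_inter_cancel_left] using this
      have h₂ : S ∩ t₂.events = S' ∩ t₂.events := by
        have := congrArg (· ∩ t₂.events) h
        simpa [Finset.inter_assoc, Finset.union_inter_cancel_right] using this
      simp [eval, ih₁ h₁, ih₂ h₂]
  | or t₁ t₂ ih₁ ih₂ =>
      simp only [events] at h
      have h₁ : S ∩ t₁.events = S' ∩ t₁.events := by
        have := congrArg (· ∩ t₁.events) h
        simpa [Finset.inter_assoc, Finset.union_inter_cancel_left] using this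
      have h₂ : S ∩ t₂.events = S' ∩ t₂.events := by
        have := congrArg (· ∩ t₂.events) h
        simpa [Finset.inter_assoc, Finset.union_inter_cancel_right] using this
      simp [eval, ih₁ h₁, ih₂ h₂]
  | not t ih =>
      simp only [events] at h
      simp [eval, ih h]

/-- indicator -/
noncomputable def ind (t : ADT B) (S : Finset B) : ℝ := if t.eval S then 1 else 0

lemma weight_union {E₁ E₂ A C : Finset B} (hd : Disjoint E₁ E₂)
    (hA : A ⊆ E₁) (hC : C ⊆ E₂) (p : B → ℝ) :
    (∏ b ∈ A ∪ C, p b) * ∏ b ∈ (E₁ ∪ E₂) \ (A ∪ C), (1 - p b) =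
      ((∏ b ∈ A, p b) * ∏ b ∈ E₁ \ A, (1 - p b)) *
        ((∏ b ∈ C, p b) * ∏ b ∈ E₂ \ C, (1 - p b)) := by
  have hAC : Disjoint A C := hd.mono hA hC
  have hsd : (E₁ ∪ E₂) \ (A ∪ C) = (E₁ \ A) ∪ (E₂ \ C) := by
    ext x
    simp only [Finset.mem_sdiff, Finset.mem_union]
    constructor
    · rintro ⟨hx | hx, hn⟩
      · exact Or.inl ⟨hx, fun hxA => hn (Or.inl hxA)⟩
      · exact Or.inr ⟨hx, fun hxC => hn (Or.inr hxC)⟩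
    · rintro (⟨hx, hn⟩ | ⟨hx, hn⟩)
      · refine ⟨Or.inl hx, ?_⟩
        rintro (h | h)
        · exact hn h
        · exact Finset.disjoint_left.mp hd hx (hC h)
      · refine ⟨Or.inr hx, ?_⟩
        rintro (h | h)
        · exact Finset.disjoint_left.mp hd (hA h) hx
        · exact hn h
  have hsdd : Disjoint (E₁ \ A) (E₂ \ C) :=
    (hd.mono (Finset.sdiff_subset) (Finset.sdiff_subset))
  rw [Finset.prod_union hAC, hsd, Finset.prod_union hsdd]
  ring

lemma aux_sum (t : ADT B) (hlin : t.Linear) (p : B → ℝ) :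
    ∑ S ∈ t.events.powerset,
        ind t S * ((∏ b ∈ S, p b) * ∏ b ∈ t.events \ S, (1 - p b)) = Vp p t := by
  induction t with
  | leaf b =>
      rw [show events (leaf b) = {b} from rfl,
        show ({b} : Finset B).powerset = {∅, {b}} by
          ext S; simp [Finset.subset_singleton_iff]]
      rw [Finset.sum_pair (Finset.singleton_ne_empty b).symm]
      simp [ind, eval, Vp]
  | and t₁ t₂ ih₁ ih₂ =>
      obtain ⟨h₁, h₂, hd⟩ := hlin
      rw [show events (t₁.and t₂) = t₁.events ∪ t₂.events from rfl,
        sum_powerset_union hd]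
      have key : ∀ A ∈ t₁.events.powerset, ∀ C ∈ t₂.events.powerset,
          ind (t₁.and t₂) (A ∪ C) *
            ((∏ b ∈ A ∪ C, p b) * ∏ b ∈ (t₁.events ∪ t₂.events) \ (A ∪ C), (1 - p b)) =
          (ind t₁ A * ((∏ b ∈ A, p b) * ∏ b ∈ t₁.events \ A, (1 - p b))) *
          (ind t₂ C * ((∏ b ∈ C, p b) * ∏ b ∈ t₂.events \ C, (1 - p b))) := by
        intro A hA C hC
        simp only [Finset.mem_powerset] at hA hC
        have e₁ : eval (A ∪ C) t₁ = eval A t₁ := by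
          apply eval_congr
          rw [Finset.union_inter_distrib_right,
            Finset.disjoint_iff_inter_eq_empty.mp (hd.symm.mono_left hC),
            Finset.union_empty]
        have e₂ : eval (A ∪ C) t₂ = eval C t₂ := by
          apply eval_congr
          rw [Finset.union_inter_distrib_right,
            Finset.disjoint_iff_inter_eq_empty.mp (hd.mono_left hA),
            Finset.empty_union]
        have hind : ind (t₁.and t₂) (A ∪ C) = ind t₁ A * ind t₂ C := by
          simp only [ind, eval, e₁, e₂]
          cases eval A t₁ <;> cases eval C t₂ <;> simp
        rw [hind, weight_union hd hA hC]
        ring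
      rw [Finset.sum_congr rfl (fun A hA => Finset.sum_congr rfl (fun C hC => key A hA C hC))]
      rw [← Finset.sum_mul_sum]
      rw [ih₁ h₁, ih₂ h₂]
      rfl
  | or t₁ t₂ ih₁ ih₂ =>
      obtain ⟨h₁, h₂, hd⟩ := hlin
      rw [show events (t₁.or t₂) = t₁.events ∪ t₂.events from rfl,
        sum_powerset_union hd]
      have key : ∀ A ∈ t₁.events.powerset, ∀ C ∈ t₂.events.powerset,
          ind (t₁.or t₂) (A ∪ C) *
            ((∏ b ∈ A ∪ C, p b) * ∏ b ∈ (t₁.events ∪ t₂.events) \ (A ∪ C), (1 - p b)) =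
          (ind t₁ A * ((∏ b ∈ A, p b) * ∏ b ∈ t₁.events \ A, (1 - p b))) *
            ((∏ b ∈ C, p b) * ∏ b ∈ t₂.events \ C, (1 - p b)) +
          ((∏ b ∈ A, p b) * ∏ b ∈ t₁.events \ A, (1 - p b)) *
            (ind t₂ C * ((∏ b ∈ C, p b) * ∏ b ∈ t₂.events \ C, (1 - p b))) -
          (ind t₁ A * ((∏ b ∈ A, p b) * ∏ b ∈ t₁.events \ A, (1 - p b))) *
          (ind t₂ C * ((∏ b ∈ C, p b) * ∏ b ∈ t₂.events \ C, (1 - p b))) := by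
        intro A hA C hC
        simp only [Finset.mem_powerset] at hA hC
        have e₁ : eval (A ∪ C) t₁ = eval A t₁ := by
          apply eval_congr
          rw [Finset.union_inter_distrib_right,
            Finset.disjoint_iff_inter_eq_empty.mp (hd.symm.mono_left hC),
            Finset.union_empty]
        have e₂ : eval (A ∪ C) t₂ = eval C t₂ := by
          apply eval_congr
          rw [Finset.union_inter_distrib_right,
            Finset.disjoint_iff_inter_eq_empty.mp (hd.mono_left hA),
            Finset.empty_union]
        have hind : ind (t₁.or t₂) (A ∪ C) =
            ind t₁ A + ind t₂ C - ind t₁ A * ind t₂ C := by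
          simp only [ind, eval, e₁, e₂]
          cases eval A t₁ <;> cases eval C t₂ <;> simp
        rw [hind, weight_union hd hA hC]
        ring
      rw [Finset.sum_congr rfl (fun A hA => Finset.sum_congr rfl (fun C hC => key A hA C hC))]
      simp only [Finset.sum_sub_distrib, Finset.sum_add_distrib]
      rw [← Finset.sum_mul_sum, ← Finset.sum_mul_sum, ← Finset.sum_mul_sum]
      rw [ih₁ h₁, ih₂ h₂, sum_weights, sum_weights]
      simp [Vp]
  | not t ih =>
      have hl : t.Linear := hlin
      have key : ∀ S ∈ t.events.powerset,
          ind t.not S * ((∏ b ∈ S, p b) * ∏ b ∈ t.events \ S, (1 - p b)) =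
          (∏ b ∈ S, p b) * ∏ b ∈ t.events \ S, (1 - p b) -
          ind t S * ((∏ b ∈ S, p b) * ∏ b ∈ t.events \ S, (1 - p b)) := by
        intro S hS
        have : ind t.not S = 1 - ind t S := by
          simp only [ind, eval]
          rcases Bool.eq_false_or_eq_true (eval S t) with h | h <;> simp [h]
        rw [this]
        ring
      rw [show (t.not).events = t.events from rfl]
      rw [Finset.sum_congr rfl key, Finset.sum_sub_distrib, sum_weights, ih hl]
      rfl

/-- for a linear term, the bottom-up probability equals the sum,
over all satisfying assignments `S`, of the probability that exactly the basic
events in `S` succeed. -/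
theorem Vp_eq_sum_satisfying (t : ADT B) (hlin : t.Linear) (p : B → ℝ)
    (hp : ∀ b, p b ∈ Set.Icc (0 : ℝ) 1) :
    Vp p t =
      ∑ S ∈ t.events.powerset.filter (fun S => t.eval S = true),
        (∏ b ∈ S, p b) * ∏ b ∈ t.events \ S, (1 - p b) := by
  rw [← aux_sum t hlin p, Finset.sum_filter]
  apply Finset.sum_congr rfl
  intro S hS
  simp only [ind]
  by_cases h : t.eval S = true <;> simp [h]

end ADT
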